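/- Let T be a binary dimension tree on D = {1,…,d}, and for a tensor a ∈ ℝ^{N₁×⋯×N_d} let M^{(α)}(a) denote the matricization of a with respect to the index subset α ⊂ D. Then for any non-leaf node α with children α_l, α_r (α = α_l ∪ α_r disjointly), range(M^{(α)}(a)) ⊆ range(M^{(α_l)}(a) ⊗ M^{(α_r)}(a)); equivalently, every column of M^{(α)}(a) lies in the span of tensor products of columns of M^{(α_l)}(a) with columns of M^{(α_r)}(a). -/

import Mathlib

/-!
Write a column of `M^{(αl ∪ αr)}(a)` as a function `F x y` of the `αl`-part `x` and the
`αr`-part `y` of the row index. Columns of `M^{(αl)}(a)` then realise the slices `F · y₀` and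
columns of `M^{(αr)}(a)` (by disjointness) the slices `F x₀ ·`. If `π` is a projection onto
the span `V` of the slices `F x₀ ·`, then `F x = π (F x) = ∑ y₀, F x y₀ • π e_{y₀}` with
`π e_{y₀} ∈ V`, which exhibits `F` in the span of the products `F · y₀ ⊗ F x₀ ·`.
-/

/-- The matricization `M^{(β)}(a)` of a tensor `a ∈ ℝ^{N₁×⋯×N_d}` with respect to an
index subset `β`: rows are indexed by the modes in `β`, columns by the modes not
in `β`. -/
def matricization {d : ℕ} (Nn : Fin d → ℕ) (a : ((i : Fin d) → Fin (Nn i)) → ℝ)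
    (β : Finset (Fin d)) :
    ((i : {i : Fin d // i ∈ β}) → Fin (Nn i.1)) →
      ((i : {i : Fin d // i ∉ β}) → Fin (Nn i.1)) → ℝ :=
  fun row col => a (fun i => if h : i ∈ β then row ⟨i, h⟩ else col ⟨i, h⟩)

open Submodule Set

theorem mem_span_columns_mul_span_rows {K X Y Z : Type*} [Field K] [Fintype Y]
    (F : X → Y → K) (p : Z → X) (q : Z → Y) :
    (fun z => F (p z) (q z)) ∈
      span K (range fun y z => F (p z) y) * span K (range fun x z => F x (q z)) := by
  classical
  let V := span K (range F)
  obtain ⟨π, hπ⟩ := V.subtype.exists_leftInverse_of_injective V.ker_subtype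
  have hexpand : ∀ x, F x = ∑ y, F x y • (π (Pi.single y 1) : Y → K) := by
    intro x
    have hx : (π (F x) : Y → K) = F x := congr_arg Subtype.val
      (LinearMap.congr_fun hπ ⟨F x, subset_span (mem_range_self x)⟩)
    conv_lhs => rw [← hx, pi_eq_sum_univ' (F x)]
    simp only [map_sum, map_smul, coe_sum, coe_smul]
  have hsum : (fun z => F (p z) (q z)) =
      ∑ y, (fun z => F (p z) y) * LinearMap.funLeft K K q (π (Pi.single y 1)) := by
    ext z
    rw [hexpand (p z)]
    simp [Finset.sum_apply, LinearMap.funLeft_apply]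
  rw [hsum]
  refine sum_mem fun y _ => mul_mem_mul (subset_span (mem_range_self y)) ?_
  have hmap : V.map (LinearMap.funLeft K K q) = span K (range fun x z => F x (q z)) := by
    rw [map_span, ← range_comp]; rfl
  exact hmap ▸ mem_map_of_mem (π (Pi.single y 1)).2

/-- Nestedness property of matricizations underlying the hierarchical Tucker format:
for disjoint index sets `αl, αr` with union `α`, every column of `M^{(α)}(a)` lies in
the span of tensor products of columns of `M^{(αl)}(a)` with columns of `M^{(αr)}(a)`. -/
theorem matricization_nestedness {d : ℕ} (Nn : Fin d → ℕ)
    (a : ((i : Fin d) → Fin (Nn i)) → ℝ)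
    (αl αr : Finset (Fin d)) (hdisj : Disjoint αl αr)
    (c : (i : {i : Fin d // i ∉ αl ∪ αr}) → Fin (Nn i.1)) :
    (fun row : (i : {i : Fin d // i ∈ αl ∪ αr}) → Fin (Nn i.1) =>
        matricization Nn a (αl ∪ αr) row c) ∈
      Submodule.span ℝ
        { g : ((i : {i : Fin d // i ∈ αl ∪ αr}) → Fin (Nn i.1)) → ℝ |
          ∃ (cl : (i : {i : Fin d // i ∉ αl}) → Fin (Nn i.1))
            (cr : (i : {i : Fin d // i ∉ αr}) → Fin (Nn i.1)),
            g = fun row =>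
              matricization Nn a αl
                (fun i => row ⟨i.1, Finset.mem_union_left _ i.2⟩) cl *
              matricization Nn a αr
                (fun i => row ⟨i.1, Finset.mem_union_right _ i.2⟩) cr } := by
  classical
  let rl (row : (i : {i : Fin d // i ∈ αl ∪ αr}) → Fin (Nn i.1)) (i : {i : Fin d // i ∈ αl}) :=
    row ⟨i.1, Finset.mem_union_left _ i.2⟩
  let rr (row : (i : {i : Fin d // i ∈ αl ∪ αr}) → Fin (Nn i.1)) (i : {i : Fin d // i ∈ αr}) :=
    row ⟨i.1, Finset.mem_union_right _ i.2⟩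
  let CL (y : (i : {i : Fin d // i ∈ αr}) → Fin (Nn i.1)) :
      (i : {i : Fin d // i ∉ αl}) → Fin (Nn i.1) := fun i =>
    if h : i.1 ∈ αr then y ⟨i.1, h⟩ else c ⟨i.1, by simp [i.2, h]⟩
  let CR (x : (i : {i : Fin d // i ∈ αl}) → Fin (Nn i.1)) :
      (i : {i : Fin d // i ∉ αr}) → Fin (Nn i.1) := fun i =>
    if h : i.1 ∈ αl then x ⟨i.1, h⟩ else c ⟨i.1, by simp [i.2, h]⟩
  let F x y := matricization Nn a αl x (CL y)
  have hcol : ∀ row, matricization Nn a (αl ∪ αr) row c = F (rl row) (rr row) := by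
    intro row
    refine congrArg a (funext fun i => ?_)
    by_cases hl : i ∈ αl <;> by_cases hr : i ∈ αr <;> simp [rl, rr, CL, hl, hr]
  have hrow : ∀ x y, F x y = matricization Nn a αr y (CR x) := by
    intro x y
    refine congrArg a (funext fun i => ?_)
    by_cases hl : i ∈ αl
    · simp [CR, hl, Finset.disjoint_left.mp hdisj hl]
    · by_cases hr : i ∈ αr <;> simp [CL, CR, hl, hr]
  have key := mem_span_columns_mul_span_rows F rl rr
  rw [span_mul_span] at key
  simp_rw [hcol]
  refine span_mono ?_ key
  rintro _ ⟨_, ⟨y, rfl⟩, _, ⟨x, rfl⟩, rfl⟩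
  exact ⟨CL y, CR x, funext fun row => congrArg (_ * ·) (hrow x _)⟩
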